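/- arXiv:cs/0607131 — 6 statements merged into one kernel-verified Lean document; each statement's English description precedes it below -/
import Mathlib

section
/- In the code-generation model, let j ∈ {1,…,n} and let y be any {0,1}^m-valued random variable that is conditionally independent of the row (X_{j1},…,X_{jm}) given (p_1,…,p_m). Let ε1 ∈ (0,1), A, B > 0, c0 ≥ 1 an integer, m = A·c0²·⌈ln(1/ε1)⌉ (assumed an integer) and Z = B·c0·⌈ln(1/ε1)⌉. If c0 ≥ B·g1(t)/(3.4·ν·A), then P[S_j > Z] ≤ ε1^{B²/(4·ν·A)}. In particular, if moreover A ≤ B²/(4ν), then P[S_j > Z] ≤ ε1. -/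
/-!
Chernoff bound: for `α ≥ 0`, `P[S_j > Z] ≤ e^{-αZ} E[e^{α S_j}]`. Once `p`, the other rows and
the auxiliary randomness are fixed, `y` is fixed while row `j` is still a vector of independent
Bernoulli(`p_i`) bits, so `E[e^{α S_j}]` factorises over the positions. Each factor is the
moment generating function of a centred two-point variable, which is at most `1 + α² σ(p_i)`
(`σ` its variance) because `e^x ≤ 1 + x + x²` for `x ≤ 1.7`; the condition on `c0` is exactly
`α g1(t) ≤ 1.7`. Averaging over `p` gives `(1 + α² ν)^m ≤ e^{m α² ν}`, and the choice
`α = B / (2 ν A c0)` turns `e^{m α² ν - α Z}` into `e^{-⌈ln (1/ε1)⌉ B² / (4 ν A)} ≤ ε1^{B²/(4νA)}`.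
-/

open MeasureTheory ProbabilityTheory Real

noncomputable section

/-- Bernoulli measure on `Bool` with parameter `p`. -/
def bern (p : ℝ) : Measure Bool :=
  ENNReal.ofReal p • Measure.dirac true + ENNReal.ofReal (1 - p) • Measure.dirac false

/-- The measure on `ℝ` with density `f` (w.r.t. Lebesgue measure). -/
def biasMeasure (f : ℝ → ℝ) : Measure ℝ :=
  MeasureTheory.volume.withDensity fun p => ENNReal.ofReal (f p)

/-- Joint law of the biases `p = (p_1,…,p_m)` (i.i.d. with density `f`) together with the
code matrix `X` whose entries `X j i` are, conditionally on `p`, independent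
Bernoulli(`p i`). -/
def codeMeasure (n m : ℕ) (f : ℝ → ℝ) :
    Measure ((Fin m → ℝ) × (Fin n → Fin m → Bool)) :=
  (Measure.pi fun _ : Fin m => biasMeasure f).bind fun p =>
    (Measure.dirac p).prod (Measure.pi fun _ : Fin n => Measure.pi fun i : Fin m => bern (p i))

/-- The accusation sum `S_j = Σ_i y_i · (g1 (p_i) if X_{ji} = 1, g0 (p_i) if X_{ji} = 0)`. -/
def accusation (m : ℕ) (g1 g0 : ℝ → ℝ) (p : Fin m → ℝ) (x : Fin m → Bool)
    (y : Fin m → Bool) : ℝ :=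
  ∑ i, if y i then (if x i then g1 (p i) else g0 (p i)) else 0

open scoped ENNReal

theorem Real.exp_le_one_add_add_sq {x : ℝ} (hx : x ≤ 1.7) : exp x ≤ 1 + x + x ^ 2 := by
  rcases le_or_gt x (-1) with hx1 | hx1
  · nlinarith [exp_le_one_iff.mpr (by linarith : x ≤ 0)]
  rcases le_or_gt x 1 with hx2 | hx2
  · have h := Real.exp_bound (x := x) (abs_le.mpr ⟨hx1.le, hx2⟩) (n := 2) (by norm_num)
    norm_num [Finset.sum_range_succ, abs_le] at h
    nlinarith [sq_abs x]
  · have h := Real.exp_bound' (x := x - 1) (by linarith) (by linarith) (n := 3) (by norm_num)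
    norm_num [Finset.sum_range_succ, Nat.factorial] at h
    have he : exp x = exp 1 * exp (x - 1) := by rw [← exp_add]; ring_nf
    nlinarith [exp_pos (x - 1), exp_pos 1, Real.exp_one_lt_d9,
      mul_le_mul_of_nonneg_left h (exp_pos 1).le]

theorem two_point_mgf_le {q u v a : ℝ} (hq0 : 0 ≤ q) (hq1 : q ≤ 1)
    (hmean : q * u + (1 - q) * v = 0) (hu : a * u ≤ 1.7) (hv : a * v ≤ 1.7) :
    q * exp (a * u) + (1 - q) * exp (a * v) ≤ 1 + a ^ 2 * (q * u ^ 2 + (1 - q) * v ^ 2) := by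
  have h1 := mul_le_mul_of_nonneg_left (exp_le_one_add_add_sq hu) hq0
  have h0 := mul_le_mul_of_nonneg_left (exp_le_one_add_add_sq hv) (sub_nonneg.mpr hq1)
  linear_combination h1 + h0 + a * hmean

theorem mul_add_one_sub_mul_eq_zero_of_eq_neg_div {q u v : ℝ} (hq : q ≠ 1)
    (hv : v = -q * u / (1 - q)) : q * u + (1 - q) * v = 0 := by
  have : 1 - q ≠ 0 := sub_ne_zero.2 hq.symm
  rw [hv]
  field_simp
  ring

theorem nonpos_of_eq_neg_div {q u v : ℝ} (hq0 : 0 ≤ q) (hq1 : q < 1) (hu : 0 ≤ u)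
    (hv : v = -q * u / (1 - q)) : v ≤ 0 :=
  hv ▸ div_nonpos_of_nonpos_of_nonneg (by nlinarith) (by linarith)

theorem exp_neg_mul_le_rpow {ε c L : ℝ} (hε : 0 < ε) (hc : 0 ≤ c) (hL : log (1 / ε) ≤ L) :
    exp (-(L * c)) ≤ ε ^ c := by
  rw [rpow_def_of_pos hε, one_div, log_inv] at *
  exact exp_le_exp.2 (by nlinarith)

theorem chernoff_bound_le_rpow {ε ν A B c0 L Z : ℝ} {m : ℕ} (hε : 0 < ε) (hν : 0 < ν)
    (hA : 0 < A) (hc0 : 0 < c0) (hL : log (1 / ε) ≤ L) (hm : (m : ℝ) = A * c0 ^ 2 * L)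
    (hZ : Z = B * c0 * L) :
    exp (-(B / (2 * ν * A * c0) * Z)) * (1 + (B / (2 * ν * A * c0)) ^ 2 * ν) ^ m
      ≤ ε ^ (B ^ 2 / (4 * ν * A)) := by
  calc _ ≤ exp (-(B / (2 * ν * A * c0) * Z)) * exp ((B / (2 * ν * A * c0)) ^ 2 * ν) ^ m := by
        gcongr
        linarith [add_one_le_exp ((B / (2 * ν * A * c0)) ^ 2 * ν)]
    _ = exp (-(L * (B ^ 2 / (4 * ν * A)))) := by
        rw [← exp_nat_mul, ← exp_add, hm, hZ]
        congr 1
        field_simp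
        ring
    _ ≤ _ := exp_neg_mul_le_rpow hε (by positivity) hL

theorem measurable_measure_of_measurable_singleton {α β : Type*} [MeasurableSpace α]
    [MeasurableSpace β] [Countable β] [MeasurableSingletonClass β] {κ : α → Measure β}
    (hκ : ∀ b, Measurable fun a => κ a {b}) : Measurable κ := by
  refine Measure.measurable_of_measurable_coe _ fun s hs => ?_
  simp_rw [← Measure.tsum_indicator_apply_singleton _ s hs]
  refine Measurable.tsum fun b => ?_
  by_cases hb : b ∈ s <;> simp [hb, hκ b]

theorem measurable_dirac_prod {α β : Type*} [MeasurableSpace α] [MeasurableSpace β]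
    {R : α → Measure β} (hR : Measurable R) [∀ a, IsProbabilityMeasure (R a)] :
    Measurable fun a => (Measure.dirac a).prod (R a) := by
  let κ : Kernel α β := ⟨R, hR⟩
  have : IsMarkovKernel κ := ⟨fun a => inferInstanceAs (IsProbabilityMeasure (R a))⟩
  refine Measure.measurable_of_measurable_coe _ fun s hs => ?_
  simp_rw [Measure.dirac_prod, Measure.map_apply measurable_prodMk_left hs]
  exact κ.measurable_kernel_prodMk_left hs

theorem ae_pi_forall_mem {ι α : Type*} [Fintype ι] [MeasurableSpace α] {μ : Measure α}
    [SigmaFinite μ] {s : Set α} (h : ∀ᵐ x ∂μ, x ∈ s) :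
    ∀ᵐ x ∂Measure.pi fun _ : ι => μ, ∀ i, x i ∈ s :=
  ae_all_iff.2 fun _ => Measure.tendsto_eval_ae_ae.eventually h

theorem lintegral_pi_prod_eq_prod {ι : Type*} [Fintype ι] {E : ι → Type*}
    [∀ i, MeasurableSpace (E i)] (μ : ∀ i, Measure (E i)) [∀ i, IsProbabilityMeasure (μ i)]
    {φ : ∀ i, E i → ℝ≥0∞} (hφ : ∀ i, Measurable (φ i)) :
    ∫⁻ x, ∏ i, φ i (x i) ∂Measure.pi μ = ∏ i, ∫⁻ y, φ i y ∂μ i := by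
  rw [lintegral_prod_eq_prod_lintegral_of_indepFun _ _
    (iIndepFun_pi fun i => (hφ i).aemeasurable) fun i => (hφ i).comp (measurable_pi_apply i)]
  exact Finset.prod_congr rfl fun i _ => (measurePreserving_eval μ i).lintegral_comp (hφ i)

theorem lintegral_pi_le_of_lintegral_update_le {ι : Type*} [Fintype ι] [DecidableEq ι]
    {E : ι → Type*} [∀ i, MeasurableSpace (E i)] (μ : ∀ i, Measure (E i))
    [∀ i, IsProbabilityMeasure (μ i)] {G : (∀ i, E i) → ℝ≥0∞} (hG : Measurable G) (j : ι)
    {C : ℝ≥0∞} (hC : ∀ x, ∫⁻ y, G (Function.update x j y) ∂μ j ≤ C) :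
    ∫⁻ x, G x ∂Measure.pi μ ≤ C := by
  obtain ⟨x⟩ := nonempty_of_isProbabilityMeasure (Measure.pi μ)
  rw [lintegral_eq_lmarginal_univ x, lmarginal_erase' _ hG (Finset.mem_univ j)]
  refine (lmarginal_mono (s := Finset.univ.erase j) (fun x => hC x) x).trans ?_
  simp [lmarginal]

theorem measure_lt_le_of_lintegral_exp_le {Ω : Type*} [MeasurableSpace Ω] {μ : Measure Ω}
    {X : Ω → ℝ} (hX : Measurable X) {α M : ℝ} (hα : 0 ≤ α)
    (hM : ∫⁻ ω, ENNReal.ofReal (exp (α * X ω)) ∂μ ≤ ENNReal.ofReal M) (Z : ℝ) :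
    μ {ω | Z < X ω} ≤ ENNReal.ofReal (exp (-(α * Z)) * M) := by
  have hZ : ENNReal.ofReal (exp (α * Z)) * μ {ω | Z < X ω} ≤ ENNReal.ofReal M := by
    refine le_trans ?_ ((mul_meas_ge_le_lintegral₀ (by fun_prop)
      (ENNReal.ofReal (exp (α * Z)))).trans hM)
    refine mul_le_mul_right (measure_mono fun ω (hω : Z < X ω) => ?_) _
    exact ENNReal.ofReal_le_ofReal (exp_le_exp.2 (mul_le_mul_of_nonneg_left hω.le hα))
  rw [ENNReal.ofReal_mul (exp_pos _).le, exp_neg, ENNReal.ofReal_inv_of_pos (exp_pos _), mul_comm,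
    ← div_eq_mul_inv,
    ENNReal.le_div_iff_mul_le (Or.inl (by positivity)) (Or.inl ENNReal.ofReal_ne_top), mul_comm]
  exact hZ

theorem bern_singleton (q : ℝ) (b : Bool) :
    bern q {b} = ENNReal.ofReal (if b then q else 1 - q) := by
  cases b <;> simp [bern]

theorem isProbabilityMeasure_bern {q : ℝ} (hq : q ∈ Set.Icc (0:ℝ) 1) :
    IsProbabilityMeasure (bern q) := by
  constructor
  simp [bern, ← ENNReal.ofReal_add hq.1 (sub_nonneg.mpr hq.2)]

theorem lintegral_bern (q : ℝ) (φ : Bool → ℝ≥0∞) :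
    ∫⁻ b, φ b ∂bern q = ENNReal.ofReal q * φ true + ENNReal.ofReal (1 - q) * φ false := by
  simp [bern, lintegral_add_measure, mul_comm]

theorem ae_biasMeasure_mem {f : ℝ → ℝ} {s : Set ℝ} (hs : MeasurableSet s)
    (hf : ∀ p ∉ s, f p = 0) : ∀ᵐ q ∂biasMeasure f, q ∈ s := by
  change biasMeasure f sᶜ = 0
  rw [biasMeasure, withDensity_apply _ hs.compl,
    setLIntegral_congr_fun hs.compl fun q hq => by rw [hf q hq, ENNReal.ofReal_zero]]
  simp

theorem lintegral_ofReal_biasMeasure {f : ℝ → ℝ} (hf_meas : Measurable f)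
    (hf_nonneg : ∀ p, 0 ≤ f p) (g : ℝ → ℝ) :
    ∫⁻ q, ENNReal.ofReal (g q) ∂biasMeasure f = ∫⁻ q, ENNReal.ofReal (f q * g q) := by
  rw [biasMeasure, lintegral_withDensity_eq_lintegral_mul_non_measurable _
    (f := fun p => ENNReal.ofReal (f p)) (by fun_prop) (ae_of_all _ fun _ => ENNReal.ofReal_lt_top)]
  simp_rw [Pi.mul_apply, ENNReal.ofReal_mul (hf_nonneg _)]

theorem lintegral_one_add_mul_biasMeasure {f : ℝ → ℝ} [IsProbabilityMeasure (biasMeasure f)]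
    (hf_meas : Measurable f) (hf_nonneg : ∀ p, 0 ≤ f p) {s : Set ℝ} (hs : MeasurableSet s)
    (hf_supp : ∀ p ∉ s, f p = 0) {g : ℝ → ℝ} (hg : ∀ q ∈ s, 0 ≤ g q)
    (hint : IntegrableOn (fun q => f q * g q) s) {c : ℝ} (hc : 0 ≤ c) :
    ∫⁻ q, ENNReal.ofReal (1 + c * g q) ∂biasMeasure f
      = ENNReal.ofReal (1 + c * ∫ q in s, f q * g q) := by
  have hfg : ∀ q, 0 ≤ f q * g q := fun q => by
    by_cases hq : q ∈ s
    · exact mul_nonneg (hf_nonneg q) (hg q hq)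
    · simp [hf_supp q hq]
  have hsplit : ∀ x : ℝ, 0 ≤ x →
      ENNReal.ofReal (1 + c * x) = 1 + ENNReal.ofReal c * ENNReal.ofReal x := fun x hx => by
    rw [ENNReal.ofReal_add zero_le_one (by positivity), ENNReal.ofReal_one, ENNReal.ofReal_mul hc]
  have hI : ENNReal.ofReal (∫ q in s, f q * g q) = ∫⁻ q, ENNReal.ofReal (g q) ∂biasMeasure f := by
    rw [lintegral_ofReal_biasMeasure hf_meas hf_nonneg, ofReal_integral_eq_lintegral_ofReal hint
      (ae_of_all _ hfg), ← lintegral_indicator hs]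
    refine lintegral_congr fun q => ?_
    by_cases hq : q ∈ s
    · simp [hq]
    · simp [hq, hf_supp q hq]
  calc ∫⁻ q, ENNReal.ofReal (1 + c * g q) ∂biasMeasure f
      = ∫⁻ q, 1 + ENNReal.ofReal c * ENNReal.ofReal (g q) ∂biasMeasure f := by
        refine lintegral_congr_ae ?_
        filter_upwards [ae_biasMeasure_mem hs hf_supp] with q hq
        exact hsplit _ (hg q hq)
    _ = 1 + ENNReal.ofReal c * ∫⁻ q, ENNReal.ofReal (g q) ∂biasMeasure f := by
        rw [lintegral_add_left measurable_const, lintegral_const_mul' _ _ ENNReal.ofReal_ne_top]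
        simp
    _ = _ := by rw [← hI, hsplit _ (setIntegral_nonneg hs fun q _ => hfg q)]

abbrev rowsMeasure (n m : ℕ) (p : Fin m → ℝ) : Measure (Fin n → Fin m → Bool) :=
  Measure.pi fun _ : Fin n => Measure.pi fun i : Fin m => bern (p i)

instance isProbabilityMeasure_rowsMeasure_projIcc (n m : ℕ) (p : Fin m → ℝ) :
    IsProbabilityMeasure (rowsMeasure n m fun i => (Set.projIcc 0 1 zero_le_one (p i) : ℝ)) :=
  have := fun i => isProbabilityMeasure_bern (Set.projIcc 0 1 zero_le_one (p i)).2
  inferInstance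

/-- `bern q` is a probability measure only for `q ∈ [0, 1]`; clamping the biases into `[0, 1]`
gives a measurable Markov kernel that agrees with `rowsMeasure` on the support of the biases. -/
theorem measurable_rowsMeasure_projIcc (n m : ℕ) :
    Measurable fun p : Fin m → ℝ =>
      rowsMeasure n m fun i => (Set.projIcc 0 1 zero_le_one (p i) : ℝ) := by
  have : ∀ p : Fin m → ℝ, ∀ i, IsProbabilityMeasure (bern (Set.projIcc 0 1 zero_le_one (p i))) :=
    fun p i => isProbabilityMeasure_bern (Set.projIcc 0 1 zero_le_one (p i)).2
  refine measurable_measure_of_measurable_singleton fun X => ?_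
  simp only [rowsMeasure, Measure.pi_singleton, bern_singleton]
  refine Finset.measurable_prod _ fun _ _ => Finset.measurable_prod _ fun i _ => ?_
  have : Measurable fun p : Fin m → ℝ => (Set.projIcc 0 1 zero_le_one (p i) : ℝ) :=
    (continuous_subtype_val.comp (continuous_projIcc.comp (continuous_apply i))).measurable
  split_ifs <;> fun_prop

theorem lintegral_codeMeasure {n m : ℕ} {f : ℝ → ℝ} [IsProbabilityMeasure (biasMeasure f)]
    (hf : ∀ᵐ q ∂biasMeasure f, q ∈ Set.Icc 0 1)
    {G : (Fin m → ℝ) × (Fin n → Fin m → Bool) → ℝ≥0∞} (hG : Measurable G) :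
    ∫⁻ a, G a ∂codeMeasure n m f
      = ∫⁻ p, ∫⁻ X, G (p, X) ∂rowsMeasure n m p ∂Measure.pi fun _ => biasMeasure f := by
  have hκ : AEMeasurable (fun p => (Measure.dirac p).prod (rowsMeasure n m p))
      (Measure.pi fun _ => biasMeasure f) := by
    refine ⟨_, measurable_dirac_prod (measurable_rowsMeasure_projIcc n m), ?_⟩
    filter_upwards [ae_pi_forall_mem hf] with p hp
    simp only [Set.projIcc_of_mem _ (hp _)]
  rw [codeMeasure, Measure.lintegral_bind hκ hG.aemeasurable]
  simp_rw [Measure.dirac_prod, lintegral_map hG measurable_prodMk_left]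

theorem isProbabilityMeasure_codeMeasure {n m : ℕ} {f : ℝ → ℝ}
    [IsProbabilityMeasure (biasMeasure f)] (hf : ∀ᵐ q ∂biasMeasure f, q ∈ Set.Icc 0 1) :
    IsProbabilityMeasure (codeMeasure n m f) := by
  constructor
  rw [← lintegral_one, lintegral_codeMeasure hf measurable_const]
  refine (lintegral_congr_ae ?_).trans (lintegral_one.trans measure_univ)
  filter_upwards [ae_pi_forall_mem hf] with p hp
  have := fun i => isProbabilityMeasure_bern (hp i)
  simp

def accusationVariance (g1 g0 : ℝ → ℝ) (q : ℝ) : ℝ := q * g1 q ^ 2 + (1 - q) * g0 q ^ 2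

theorem accusationVariance_nonneg (g1 g0 : ℝ → ℝ) {q : ℝ} (hq : q ∈ Set.Icc (0:ℝ) 1) :
    0 ≤ accusationVariance g1 g0 q := by
  have := hq.1
  have := sub_nonneg.mpr hq.2
  unfold accusationVariance
  positivity

theorem measurable_accusationVariance {g1 g0 : ℝ → ℝ} (hg1 : Measurable g1)
    (hg0 : Measurable g0) : Measurable (accusationVariance g1 g0) := by
  unfold accusationVariance
  fun_prop

theorem measurable_accusation {m : ℕ} {g1 g0 : ℝ → ℝ} (hg1 : Measurable g1)
    (hg0 : Measurable g0) :
    Measurable fun z : (Fin m → ℝ) × (Fin m → Bool) × (Fin m → Bool) =>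
      accusation m g1 g0 z.1 z.2.1 z.2.2 := by
  refine measurable_from_prod_countable_left fun xy => ?_
  refine Finset.measurable_sum _ fun i _ => ?_
  dsimp only
  split_ifs <;> fun_prop

theorem measurable_accusation_code {n m : ℕ} {g1 g0 : ℝ → ℝ} (hg1 : Measurable g1)
    (hg0 : Measurable g0) (j : Fin n) {Ω' : Type*} [MeasurableSpace Ω']
    {ρ : (Fin m → ℝ) → (Fin n → Fin m → Bool) → Ω' → (Fin m → Bool)}
    (hρ_meas : Measurable
      (fun q : ((Fin m → ℝ) × (Fin n → Fin m → Bool)) × Ω' => ρ q.1.1 q.1.2 q.2)) :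
    Measurable fun q : ((Fin m → ℝ) × (Fin n → Fin m → Bool)) × Ω' =>
      accusation m g1 g0 q.1.1 (q.1.2 j) (ρ q.1.1 q.1.2 q.2) :=
  (measurable_accusation hg1 hg0).comp <| (measurable_fst.comp measurable_fst).prodMk <|
    ((measurable_pi_apply j).comp (measurable_snd.comp measurable_fst)).prodMk hρ_meas

theorem lintegral_exp_accusation_le_prod {m : ℕ} {g1 g0 : ℝ → ℝ} {p : Fin m → ℝ}
    (hp : ∀ i, p i ∈ Set.Icc 0 1) (hmean : ∀ i, p i * g1 (p i) + (1 - p i) * g0 (p i) = 0)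
    {α : ℝ} (h1 : ∀ i, α * g1 (p i) ≤ 1.7) (h0 : ∀ i, α * g0 (p i) ≤ 1.7) (y : Fin m → Bool) :
    ∫⁻ x, ENNReal.ofReal (exp (α * accusation m g1 g0 p x y)) ∂Measure.pi (fun i => bern (p i))
      ≤ ∏ i, ENNReal.ofReal (1 + α ^ 2 * accusationVariance g1 g0 (p i)) := by
  have := fun i => isProbabilityMeasure_bern (hp i)
  simp_rw [accusation, Finset.mul_sum, exp_sum,
    ENNReal.ofReal_prod_of_nonneg fun _ _ => (exp_pos _).le]
  rw [lintegral_pi_prod_eq_prod (E := fun _ => Bool) (φ := fun i b => ENNReal.ofReal (exp (α *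
    if y i then (if b then g1 (p i) else g0 (p i)) else 0))) _ fun _ => .of_discrete]
  refine Finset.prod_le_prod' fun i _ => ?_
  have hq0 := (hp i).1
  have hq1 := sub_nonneg.mpr (hp i).2
  rw [lintegral_bern, ← ENNReal.ofReal_mul hq0, ← ENNReal.ofReal_mul hq1,
    ← ENNReal.ofReal_add (by positivity) (by positivity)]
  refine ENNReal.ofReal_le_ofReal ?_
  cases y i
  · have := accusationVariance_nonneg g1 g0 (hp i)
    simp only [Bool.false_eq_true, if_false, mul_zero, exp_zero]
    nlinarith
  · simpa [accusationVariance] using two_point_mgf_le hq0 (hp i).2 (hmean i) (h1 i) (h0 i)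

theorem lintegral_exp_accusation_rows_le {n m : ℕ} {g1 g0 : ℝ → ℝ} {p : Fin m → ℝ}
    (hp : ∀ i, p i ∈ Set.Icc 0 1) (hmean : ∀ i, p i * g1 (p i) + (1 - p i) * g0 (p i) = 0)
    {α : ℝ} (h1 : ∀ i, α * g1 (p i) ≤ 1.7) (h0 : ∀ i, α * g0 (p i) ≤ 1.7)
    {Ω' : Type*} [MeasurableSpace Ω'] (μ' : Measure Ω') [IsProbabilityMeasure μ'] (j : Fin n)
    {y : (Fin n → Fin m → Bool) → Ω' → (Fin m → Bool)} (hy : Measurable (Function.uncurry y))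
    (hy_indep : ∀ X X' r, (∀ j' : Fin n, j' ≠ j → X j' = X' j') → y X r = y X' r) :
    ∫⁻ X, ∫⁻ r, ENNReal.ofReal (exp (α * accusation m g1 g0 p (X j) (y X r))) ∂μ'
        ∂rowsMeasure n m p
      ≤ ∏ i, ENNReal.ofReal (1 + α ^ 2 * accusationVariance g1 g0 (p i)) := by
  have := fun i => isProbabilityMeasure_bern (hp i)
  have hjy : Measurable fun q : (Fin n → Fin m → Bool) × Ω' => (q.1 j, y q.1 q.2) :=
    ((measurable_pi_apply j).comp measurable_fst).prodMk hy
  have hacc : Measurable fun z : (Fin m → Bool) × (Fin m → Bool) =>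
      ENNReal.ofReal (exp (α * accusation m g1 g0 p z.1 z.2)) := .of_discrete
  have hF : Measurable fun q : (Fin n → Fin m → Bool) × Ω' =>
      ENNReal.ofReal (exp (α * accusation m g1 g0 p (q.1 j) (y q.1 q.2))) := by fun_prop
  rw [lintegral_lintegral_swap hF.aemeasurable]
  calc _ ≤ ∫⁻ _ : Ω', ∏ i, ENNReal.ofReal (1 + α ^ 2 * accusationVariance g1 g0 (p i)) ∂μ' :=
        lintegral_mono fun r => ?_
    _ = _ := by simp
  -- Integrating row `j` first, with the other rows and `r` fixed, `y` is a constant.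
  refine lintegral_pi_le_of_lintegral_update_le _ .of_discrete j fun X => ?_
  have hyX : ∀ x, y (Function.update X j x) r = y X r := fun x =>
    hy_indep _ _ r fun j' hj' => Function.update_of_ne hj' x X
  simp only [Function.update_self, hyX]
  exact lintegral_exp_accusation_le_prod hp hmean h1 h0 (y X r)

theorem lintegral_exp_accusation_le {n m : ℕ} {f : ℝ → ℝ} [IsProbabilityMeasure (biasMeasure f)]
    {s : Set ℝ} (hs : MeasurableSet s) (hs01 : s ⊆ Set.Icc 0 1) (hf_supp : ∀ p ∉ s, f p = 0)
    {g1 g0 : ℝ → ℝ} (hg1 : Measurable g1) (hg0 : Measurable g0)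
    (hmean : ∀ q ∈ s, q * g1 q + (1 - q) * g0 q = 0)
    {α : ℝ} (h1 : ∀ q ∈ s, α * g1 q ≤ 1.7) (h0 : ∀ q ∈ s, α * g0 q ≤ 1.7)
    {Ω' : Type*} [MeasurableSpace Ω'] (μ' : Measure Ω') [IsProbabilityMeasure μ'] (j : Fin n)
    {ρ : (Fin m → ℝ) → (Fin n → Fin m → Bool) → Ω' → (Fin m → Bool)}
    (hρ_meas : Measurable
      (fun q : ((Fin m → ℝ) × (Fin n → Fin m → Bool)) × Ω' => ρ q.1.1 q.1.2 q.2))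
    (hρ_indep : ∀ p X X' r, (∀ j' : Fin n, j' ≠ j → X j' = X' j') → ρ p X r = ρ p X' r) :
    ∫⁻ q, ENNReal.ofReal (exp (α * accusation m g1 g0 q.1.1 (q.1.2 j) (ρ q.1.1 q.1.2 q.2)))
        ∂(codeMeasure n m f).prod μ'
      ≤ (∫⁻ q, ENNReal.ofReal (1 + α ^ 2 * accusationVariance g1 g0 q) ∂biasMeasure f) ^ m := by
  have hfs := ae_biasMeasure_mem hs hf_supp
  have hF : Measurable fun q : ((Fin m → ℝ) × (Fin n → Fin m → Bool)) × Ω' =>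
      ENNReal.ofReal (exp (α * accusation m g1 g0 q.1.1 (q.1.2 j) (ρ q.1.1 q.1.2 q.2))) := by
    have := measurable_accusation_code hg1 hg0 j hρ_meas
    fun_prop
  rw [lintegral_prod _ hF.aemeasurable,
    lintegral_codeMeasure (hfs.mono fun q hq => hs01 hq) hF.lintegral_prod_right']
  calc _ ≤ ∫⁻ p, ∏ i, ENNReal.ofReal (1 + α ^ 2 * accusationVariance g1 g0 (p i))
        ∂Measure.pi fun _ => biasMeasure f := by
        refine lintegral_mono_ae ?_
        filter_upwards [ae_pi_forall_mem hfs] with p hp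
        exact lintegral_exp_accusation_rows_le (fun i => hs01 (hp i)) (fun i => hmean _ (hp i))
          (fun i => h1 _ (hp i)) (fun i => h0 _ (hp i)) μ' j
          (hρ_meas.comp (measurable_const.prodMk measurable_fst |>.prodMk measurable_snd))
          (hρ_indep p)
    _ = _ := by
        have := measurable_accusationVariance hg1 hg0
        rw [lintegral_pi_prod_eq_prod (E := fun _ => ℝ)
          (φ := fun _ q => ENNReal.ofReal (1 + α ^ 2 * accusationVariance g1 g0 q)) _
          fun _ => by fun_prop]
        simp

theorem measure_accusation_gt_le {n m : ℕ} {f : ℝ → ℝ} [IsProbabilityMeasure (biasMeasure f)]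
    (hf_meas : Measurable f) (hf_nonneg : ∀ p, 0 ≤ f p) {s : Set ℝ} (hs : MeasurableSet s)
    (hs01 : s ⊆ Set.Icc 0 1) (hf_supp : ∀ p ∉ s, f p = 0)
    {g1 g0 : ℝ → ℝ} (hg1 : Measurable g1) (hg0 : Measurable g0)
    (hmean : ∀ q ∈ s, q * g1 q + (1 - q) * g0 q = 0)
    (hint : IntegrableOn (fun q => f q * accusationVariance g1 g0 q) s)
    {α : ℝ} (hα : 0 ≤ α) (h1 : ∀ q ∈ s, α * g1 q ≤ 1.7) (h0 : ∀ q ∈ s, α * g0 q ≤ 1.7)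
    {Ω' : Type*} [MeasurableSpace Ω'] (μ' : Measure Ω') [IsProbabilityMeasure μ'] (j : Fin n)
    {ρ : (Fin m → ℝ) → (Fin n → Fin m → Bool) → Ω' → (Fin m → Bool)}
    (hρ_meas : Measurable
      (fun q : ((Fin m → ℝ) × (Fin n → Fin m → Bool)) × Ω' => ρ q.1.1 q.1.2 q.2))
    (hρ_indep : ∀ p X X' r, (∀ j' : Fin n, j' ≠ j → X j' = X' j') → ρ p X r = ρ p X' r)
    (Z : ℝ) :
    ((codeMeasure n m f).prod μ')
        {q | Z < accusation m g1 g0 q.1.1 (q.1.2 j) (ρ q.1.1 q.1.2 q.2)}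
      ≤ ENNReal.ofReal
          (exp (-(α * Z)) * (1 + α ^ 2 * ∫ q in s, f q * accusationVariance g1 g0 q) ^ m) := by
  have hσ : ∀ q ∈ s, 0 ≤ accusationVariance g1 g0 q :=
    fun q hq => accusationVariance_nonneg g1 g0 (hs01 hq)
  have hν : 0 ≤ ∫ q in s, f q * accusationVariance g1 g0 q :=
    setIntegral_nonneg hs fun q hq => mul_nonneg (hf_nonneg q) (hσ q hq)
  refine measure_lt_le_of_lintegral_exp_le (measurable_accusation_code hg1 hg0 j hρ_meas) hα ?_ Z
  rw [ENNReal.ofReal_pow (by positivity), ← lintegral_one_add_mul_biasMeasure hf_meas hf_nonneg hs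
    hf_supp hσ hint (sq_nonneg α)]
  exact lintegral_exp_accusation_le hs hs01 hf_supp hg1 hg0 hmean h1 h0 μ' j hρ_meas hρ_indep

theorem soundness_condition_general
    (n m : ℕ)
    (t : ℝ) (ht : t ∈ Set.Ioo (0:ℝ) (1/2))
    (f : ℝ → ℝ) (hf_meas : Measurable f) (hf_nonneg : ∀ p, 0 ≤ f p)
    (hf_supp : ∀ p, p ∉ Set.Icc t (1-t) → f p = 0)
    (hf_prob : IsProbabilityMeasure (biasMeasure f))
    (g1 : ℝ → ℝ) (hg1_meas : Measurable g1)
    (hg1_pos : ∀ p ∈ Set.Ioo (0:ℝ) 1, 0 < g1 p)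
    (hg1_anti : AntitoneOn g1 (Set.Ioo (0:ℝ) 1))
    (g0 : ℝ → ℝ) (hg0 : ∀ p, g0 p = - p * g1 p / (1 - p))
    (ν : ℝ)
    (hν : ν = ∫ p in Set.Icc t (1-t), f p * (p * g1 p ^ 2 + (1-p) * g0 p ^ 2))
    (Ω' : Type*) [MeasurableSpace Ω'] (μ' : Measure Ω') [IsProbabilityMeasure μ']
    (j : Fin n)
    (ρ : (Fin m → ℝ) → (Fin n → Fin m → Bool) → Ω' → (Fin m → Bool))
    (hρ_meas : Measurable
      (fun q : ((Fin m → ℝ) × (Fin n → Fin m → Bool)) × Ω' => ρ q.1.1 q.1.2 q.2))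
    (hρ_indep : ∀ p X X' r, (∀ j' : Fin n, j' ≠ j → X j' = X' j') → ρ p X r = ρ p X' r)
    (ε1 : ℝ) (hε1 : ε1 ∈ Set.Ioo (0:ℝ) 1)
    (A B : ℝ) (hA : 0 < A) (hB : 0 < B)
    (c0 : ℕ) (hc0 : 1 ≤ c0)
    (hmA : (m:ℝ) = A * (c0:ℝ)^2 * (⌈Real.log (1/ε1)⌉ : ℝ))
    (Z : ℝ) (hZ : Z = B * (c0:ℝ) * (⌈Real.log (1/ε1)⌉ : ℝ))
    (hc0' : B * g1 t / (3.4 * ν * A) ≤ (c0:ℝ)) :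
    ((codeMeasure n m f).prod μ')
        {q | Z < accusation m g1 g0 q.1.1 (q.1.2 j) (ρ q.1.1 q.1.2 q.2)}
        ≤ ENNReal.ofReal (ε1 ^ (B^2 / (4 * ν * A)))
    ∧ (A ≤ B^2 / (4 * ν) →
      ((codeMeasure n m f).prod μ')
        {q | Z < accusation m g1 g0 q.1.1 (q.1.2 j) (ρ q.1.1 q.1.2 q.2)}
        ≤ ENNReal.ofReal ε1) := by
  obtain ⟨ht0, ht1⟩ := ht
  obtain ⟨hε0, hε1⟩ := hε1
  replace hν : ν = ∫ q in Set.Icc t (1 - t), f q * accusationVariance g1 g0 q := hν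
  have hs : Set.Icc t (1 - t) ⊆ Set.Ioo 0 1 := fun q hq => ⟨by linarith [hq.1], by linarith [hq.2]⟩
  have := isProbabilityMeasure_codeMeasure (n := n) (m := m) <|
    (ae_biasMeasure_mem measurableSet_Icc hf_supp).mono fun q hq => Set.Ioo_subset_Icc_self (hs hq)
  rcases le_or_gt ν 0 with hν0 | hν0
  · have hc : B ^ 2 / (4 * ν * A) ≤ 0 := div_nonpos_of_nonneg_of_nonpos (sq_nonneg B) (by nlinarith)
    have hc' : B ^ 2 / (4 * ν) ≤ 0 := div_nonpos_of_nonneg_of_nonpos (sq_nonneg B) (by linarith)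
    exact ⟨prob_le_one.trans (ENNReal.one_le_ofReal.2
      (one_le_rpow_of_pos_of_le_one_of_nonpos hε0 hε1.le hc)), fun hA' => by linarith⟩
  -- A non-integrable integrand would make the Bochner integral `ν` vanish.
  have hint : IntegrableOn (fun q => f q * accusationVariance g1 g0 q) (Set.Icc t (1 - t)) := by
    by_contra h
    rw [integral_undef h] at hν
    linarith
  have hc0pos : (0:ℝ) < c0 := by exact_mod_cast hc0
  -- `α` minimises `m α² ν - α Z`.
  set α := B / (2 * ν * A * c0)
  have hα : 0 ≤ α := by positivity
  have hαg1 : α * g1 t ≤ 1.7 := by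
    rw [div_le_iff₀ (by positivity)] at hc0'
    rw [div_mul_eq_mul_div, div_le_iff₀ (by positivity)]
    linarith
  have key := measure_accusation_gt_le hf_meas hf_nonneg measurableSet_Icc
    (hs.trans Set.Ioo_subset_Icc_self) hf_supp hg1_meas (funext hg0 ▸ by fun_prop)
    (fun q hq => mul_add_one_sub_mul_eq_zero_of_eq_neg_div (hs hq).2.ne (hg0 q)) hint hα
    (fun q hq =>
      (mul_le_mul_of_nonneg_left (hg1_anti ⟨ht0, by linarith⟩ (hs hq) hq.1) hα).trans hαg1)
    (fun q hq => (mul_nonpos_of_nonneg_of_nonpos hα (nonpos_of_eq_neg_div (hs hq).1.le (hs hq).2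
      (hg1_pos q (hs hq)).le (hg0 q))).trans (by norm_num))
    μ' j hρ_meas hρ_indep Z
  rw [← hν] at key
  replace key := key.trans (ENNReal.ofReal_le_ofReal
    (chernoff_bound_le_rpow hε0 hν0 hA hc0pos (Int.le_ceil _) hmA hZ))
  refine ⟨key, fun hA' => key.trans (ENNReal.ofReal_le_ofReal
    (rpow_le_self_of_le_one hε0.le hε1.le ((one_le_div (by positivity)).2 ?_)))⟩
  linarith [(le_div_iff₀ (by positivity : 0 < 4 * ν)).1 hA']

/-- soundness of the generalized Tardos scheme. In the code-generation model,
with `y` conditionally independent of row `j` given `p` (modelled as `y = ρ p X r` with `ρ`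
not depending on row `j`, and `r` independent auxiliary randomness), if
`m = A·c0²·⌈ln (1/ε1)⌉`, `Z = B·c0·⌈ln (1/ε1)⌉` and `c0 ≥ B·g1 t / (3.4·ν·A)`, then
`P[S_j > Z] ≤ ε1 ^ (B²/(4νA))`; if moreover `A ≤ B²/(4ν)` then `P[S_j > Z] ≤ ε1`. -/
theorem soundness_condition
    (n m : ℕ) (hn : 1 ≤ n) (hm : 1 ≤ m)
    (t : ℝ) (ht : t ∈ Set.Ioo (0:ℝ) (1/2))
    (f : ℝ → ℝ) (hf_meas : Measurable f) (hf_nonneg : ∀ p, 0 ≤ f p)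
    (hf_supp : ∀ p, p ∉ Set.Icc t (1-t) → f p = 0)
    (hf_prob : IsProbabilityMeasure (biasMeasure f))
    (g1 : ℝ → ℝ) (hg1_meas : Measurable g1)
    (hg1_pos : ∀ p ∈ Set.Ioo (0:ℝ) 1, 0 < g1 p)
    (hg1_anti : AntitoneOn g1 (Set.Ioo (0:ℝ) 1))
    (g0 : ℝ → ℝ) (hg0 : ∀ p, g0 p = - p * g1 p / (1 - p))
    (ν : ℝ)
    (hν : ν = ∫ p in Set.Icc t (1-t), f p * (p * g1 p ^ 2 + (1-p) * g0 p ^ 2))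
    (Ω' : Type*) [MeasurableSpace Ω'] (μ' : Measure Ω') [IsProbabilityMeasure μ']
    (j : Fin n)
    (ρ : (Fin m → ℝ) → (Fin n → Fin m → Bool) → Ω' → (Fin m → Bool))
    (hρ_meas : Measurable
      (fun q : ((Fin m → ℝ) × (Fin n → Fin m → Bool)) × Ω' => ρ q.1.1 q.1.2 q.2))
    (hρ_indep : ∀ p X X' r, (∀ j' : Fin n, j' ≠ j → X j' = X' j') → ρ p X r = ρ p X' r)
    (ε1 : ℝ) (hε1 : ε1 ∈ Set.Ioo (0:ℝ) 1)
    (A B : ℝ) (hA : 0 < A) (hB : 0 < B)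
    (c0 : ℕ) (hc0 : 1 ≤ c0)
    (hmA : (m:ℝ) = A * (c0:ℝ)^2 * (⌈Real.log (1/ε1)⌉ : ℝ))
    (Z : ℝ) (hZ : Z = B * (c0:ℝ) * (⌈Real.log (1/ε1)⌉ : ℝ))
    (hc0' : B * g1 t / (3.4 * ν * A) ≤ (c0:ℝ)) :
    ((codeMeasure n m f).prod μ')
        {q | Z < accusation m g1 g0 q.1.1 (q.1.2 j) (ρ q.1.1 q.1.2 q.2)}
        ≤ ENNReal.ofReal (ε1 ^ (B^2 / (4 * ν * A)))
    ∧ (A ≤ B^2 / (4 * ν) →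
      ((codeMeasure n m f).prod μ')
        {q | Z < accusation m g1 g0 q.1.1 (q.1.2 j) (ρ q.1.1 q.1.2 q.2)}
        ≤ ENNReal.ofReal ε1) :=
  soundness_condition_general n m t ht f hf_meas hf_nonneg hf_supp hf_prob g1 hg1_meas hg1_pos
    hg1_anti g0 hg0 ν hν Ω' μ' j ρ hρ_meas hρ_indep ε1 hε1 A B hA hB c0 hc0 hmA Z hZ hc0'
end
end

section
/- Let t ∈ (0,1/2) and let s: [t,1/2] → [0,∞) be measurable with I := ∫_t^{1/2} s(p)/√(p(1−p)) dp ∈ (0,∞). Then for every measurable f: [t,1/2] → (0,∞) with ∫_t^{1/2} f(p) dp = 1/2, one has ν[s,f] := 2·∫_t^{1/2} s(p)²/(p(1−p)·f(p)) dp ≥ 4·I², with equality if and only if f(p) = s(p)/(2·I·√(p(1−p))) for almost every p ∈ [t,1/2]. In the equality case the corresponding accusation function g1(p) = s(p)/(p·f(p)) equals 2·I·√((1−p)/p), a positive multiple of Tardos' g1^T(p) = √((1−p)/p); that is, for every fixed s = p·f·g1, the quantity ν is minimized exactly when g1 is a positive multiple of g1^T. -/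
open MeasureTheory Real
open scoped ENNReal

/-!
Put `a(p) = s(p) / √(p(1-p))`, so that the integrand of `ν` is `a² / f`. Integrating the pointwise
identity `a² / f + c² f = (a - c f)² / f + 2 c a` with `c = ∫ a / ∫ f = 2I` gives
`ν = 4I² + 2 ∫ (a - 2I f)² / f`, so `ν ≥ 4I²` with equality iff `a = 2I f` almost everywhere.
-/

section

variable {α : Type*} [MeasurableSpace α] {μ : Measure α} {a f : α → ℝ}

lemma sq_div_add_sq_mul_eq (a f c : ℝ) (hf : f ≠ 0) :
    a ^ 2 / f + c ^ 2 * f = (a - c * f) ^ 2 / f + 2 * c * a := by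
  field_simp
  ring

theorem lintegral_sq_div_eq_add (ha : 0 ≤ᵐ[μ] a) (hf : ∀ᵐ x ∂μ, 0 < f x)
    (ha_int : Integrable a μ) (hf_int : Integrable f μ) (hM : 0 < ∫ x, f x ∂μ) :
    ∫⁻ x, ENNReal.ofReal (a x ^ 2 / f x) ∂μ
      = ∫⁻ x, ENNReal.ofReal ((a x - ((∫ y, a y ∂μ) / ∫ y, f y ∂μ) * f x) ^ 2 / f x) ∂μ
        + ENNReal.ofReal ((∫ x, a x ∂μ) ^ 2 / ∫ x, f x ∂μ) := by
  set A := ∫ x, a x ∂μ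
  set M := ∫ x, f x ∂μ
  set c := A / M
  have hA : 0 ≤ A := integral_nonneg_of_ae ha
  have hc : 0 ≤ c := div_nonneg hA hM.le
  have hf_nn : 0 ≤ᵐ[μ] f := hf.mono fun _ hx => hx.le
  have ha_meas := ha_int.aemeasurable
  have hf_meas := hf_int.aemeasurable
  have hpointwise : ∀ᵐ x ∂μ,
      ENNReal.ofReal (a x ^ 2 / f x) + ENNReal.ofReal (c ^ 2) * ENNReal.ofReal (f x)
        = ENNReal.ofReal ((a x - c * f x) ^ 2 / f x)
          + ENNReal.ofReal (2 * c) * ENNReal.ofReal (a x) := by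
    filter_upwards [ha, hf] with x hax hfx
    have hax : 0 ≤ a x := hax
    rw [← ENNReal.ofReal_mul (sq_nonneg c), ← ENNReal.ofReal_mul (by positivity),
      ← ENNReal.ofReal_add (by positivity) (by positivity),
      ← ENNReal.ofReal_add (by positivity) (by positivity),
      sq_div_add_sq_mul_eq _ _ _ hfx.ne']
  have hintegrated := lintegral_congr_ae hpointwise
  rw [lintegral_add_left' (by fun_prop), lintegral_add_left' (by fun_prop),
    lintegral_const_mul'' _ hf_meas.ennreal_ofReal,
    lintegral_const_mul'' _ ha_meas.ennreal_ofReal,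
    ← ofReal_integral_eq_lintegral_ofReal hf_int hf_nn,
    ← ofReal_integral_eq_lintegral_ofReal ha_int ha,
    ← ENNReal.ofReal_mul (sq_nonneg c), ← ENNReal.ofReal_mul (by positivity)]
    at hintegrated
  have hcM : c ^ 2 * M = A ^ 2 / M := by simp only [c]; field_simp
  have hcA : 2 * c * A = A ^ 2 / M + A ^ 2 / M := by simp only [c]; ring
  rw [hcM, hcA, ENNReal.ofReal_add (by positivity) (by positivity), ← add_assoc]
    at hintegrated
  exact (ENNReal.add_left_inj ENNReal.ofReal_ne_top).mp hintegrated

theorem lintegral_sq_sub_mul_div_eq_zero_iff (hf : ∀ᵐ x ∂μ, 0 < f x)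
    (ha_meas : AEMeasurable a μ) (hf_meas : AEMeasurable f μ) (c : ℝ) :
    ∫⁻ x, ENNReal.ofReal ((a x - c * f x) ^ 2 / f x) ∂μ = 0 ↔ ∀ᵐ x ∂μ, a x = c * f x := by
  rw [lintegral_eq_zero_iff' (by fun_prop)]
  constructor
  · intro h
    filter_upwards [h, hf] with x hx hfx
    rw [Pi.zero_apply, ENNReal.ofReal_eq_zero, div_le_iff₀ hfx, zero_mul] at hx
    exact sub_eq_zero.mp (pow_eq_zero_iff two_ne_zero |>.mp (le_antisymm hx (sq_nonneg _)))
  · intro h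
    filter_upwards [h] with x hx
    simp [hx]

theorem ofReal_sq_integral_div_le_lintegral_sq_div (ha : 0 ≤ᵐ[μ] a) (hf : ∀ᵐ x ∂μ, 0 < f x)
    (ha_int : Integrable a μ) (hf_int : Integrable f μ) (hM : 0 < ∫ x, f x ∂μ) :
    ENNReal.ofReal ((∫ x, a x ∂μ) ^ 2 / ∫ x, f x ∂μ)
      ≤ ∫⁻ x, ENNReal.ofReal (a x ^ 2 / f x) ∂μ := by
  rw [lintegral_sq_div_eq_add ha hf ha_int hf_int hM]
  exact le_add_self

theorem lintegral_sq_div_eq_iff (ha : 0 ≤ᵐ[μ] a) (hf : ∀ᵐ x ∂μ, 0 < f x)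
    (ha_int : Integrable a μ) (hf_int : Integrable f μ) (hM : 0 < ∫ x, f x ∂μ) :
    ∫⁻ x, ENNReal.ofReal (a x ^ 2 / f x) ∂μ
        = ENNReal.ofReal ((∫ x, a x ∂μ) ^ 2 / ∫ x, f x ∂μ)
      ↔ ∀ᵐ x ∂μ, a x = ((∫ y, a y ∂μ) / ∫ y, f y ∂μ) * f x := by
  rw [lintegral_sq_div_eq_add ha hf ha_int hf_int hM,
    ← lintegral_sq_sub_mul_div_eq_zero_iff hf ha_int.aemeasurable hf_int.aemeasurable]
  nth_rewrite 2 [← zero_add (ENNReal.ofReal _)]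
  exact ENNReal.add_left_inj ENNReal.ofReal_ne_top

end

lemma sqrt_mul_one_sub_div_self {p : ℝ} (hp : 0 < p) :
    √(p * (1 - p)) / p = √((1 - p) / p) := by
  rw [show (1 - p) / p = p * (1 - p) / p ^ 2 by field_simp, sqrt_div' _ (sq_nonneg p),
    sqrt_sq hp.le]

lemma div_mul_eq_of_eq_div_mul_sqrt {p s f I : ℝ} (hp : 0 < p) (hf : 0 < f)
    (hfs : f = s / (2 * I * √(p * (1 - p)))) : s / (p * f) = 2 * I * √((1 - p) / p) := by
  have hden : 2 * I * √(p * (1 - p)) ≠ 0 := by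
    rintro h
    rw [h, div_zero] at hfs
    exact hf.ne' hfs
  have hs : s ≠ 0 := by
    rintro rfl
    rw [zero_div] at hfs
    exact hf.ne' hfs
  rw [← sqrt_mul_one_sub_div_self hp, hfs]
  field_simp

theorem nu_ge_and_optimal_g1_general
    (t : ℝ) (ht : t ∈ Set.Ioo (0:ℝ) (1/2))
    (s : ℝ → ℝ)
    (hs_nonneg : ∀ p ∈ Set.Icc t (1/2 : ℝ), 0 ≤ s p)
    (I : ℝ) (hI : I = ∫ p in Set.Icc t (1/2 : ℝ), s p / Real.sqrt (p * (1 - p)))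
    (hI_pos : 0 < I)
    (f : ℝ → ℝ)
    (hf_pos : ∀ p ∈ Set.Icc t (1/2 : ℝ), 0 < f p)
    (hf_norm : (∫ p in Set.Icc t (1/2 : ℝ), f p) = 1/2) :
    ENNReal.ofReal (4 * I ^ 2)
      ≤ 2 * ∫⁻ p in Set.Icc t (1/2 : ℝ), ENNReal.ofReal (s p ^ 2 / (p * (1 - p) * f p))
    ∧ ((2 * ∫⁻ p in Set.Icc t (1/2 : ℝ), ENNReal.ofReal (s p ^ 2 / (p * (1 - p) * f p)))
          = ENNReal.ofReal (4 * I ^ 2)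
        ↔ (∀ᵐ p ∂(volume.restrict (Set.Icc t (1/2 : ℝ))),
            f p = s p / (2 * I * Real.sqrt (p * (1 - p)))))
    ∧ ((∀ᵐ p ∂(volume.restrict (Set.Icc t (1/2 : ℝ))),
          f p = s p / (2 * I * Real.sqrt (p * (1 - p)))) →
        (∀ᵐ p ∂(volume.restrict (Set.Icc t (1/2 : ℝ))),
          s p / (p * f p) = 2 * I * Real.sqrt ((1 - p) / p))) := by
  set S := Set.Icc t (1/2 : ℝ)
  have hmem : ∀ᵐ p ∂volume.restrict S, p ∈ S := ae_restrict_mem measurableSet_Icc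
  have hp_pos : ∀ p ∈ S, 0 < p := fun p hp => ht.1.trans_le hp.1
  have hpq_pos : ∀ p ∈ S, 0 < p * (1 - p) := fun p hp =>
    mul_pos (hp_pos p hp) (by linarith [hp.2])
  set a : ℝ → ℝ := fun p => s p / √(p * (1 - p))
  have ha : ∀ᵐ p ∂volume.restrict S, 0 ≤ a p := by
    filter_upwards [hmem] with p hp using div_nonneg (hs_nonneg p hp) (sqrt_nonneg _)
  have hf : ∀ᵐ p ∂volume.restrict S, 0 < f p := by
    filter_upwards [hmem] with p hp using hf_pos p hp
  have hM : 0 < ∫ p in S, f p := by rw [hf_norm]; norm_num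
  have ha_int : Integrable a (volume.restrict S) := .of_integral_ne_zero (hI ▸ hI_pos.ne')
  have hf_int : Integrable f (volume.restrict S) := .of_integral_ne_zero hM.ne'
  have hν : ∫⁻ p in S, ENNReal.ofReal (s p ^ 2 / (p * (1 - p) * f p))
      = ∫⁻ p in S, ENNReal.ofReal (a p ^ 2 / f p) := by
    refine lintegral_congr_ae ?_
    filter_upwards [hmem] with p hp
    rw [div_pow, sq_sqrt (hpq_pos p hp).le, div_div]
  have h4I : ENNReal.ofReal (4 * I ^ 2) = 2 * ENNReal.ofReal (I ^ 2 / (1/2)) := by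
    rw [← ENNReal.ofReal_ofNat 2, ← ENNReal.ofReal_mul (by norm_num)]
    ring_nf
  have hlower := ofReal_sq_integral_div_le_lintegral_sq_div ha hf ha_int hf_int hM
  have hequal := lintegral_sq_div_eq_iff ha hf ha_int hf_int hM
  rw [← hI, hf_norm] at hlower hequal
  refine ⟨?_, ?_, fun hopt => ?_⟩
  · rw [h4I, hν]
    gcongr
  · rw [h4I, hν, ENNReal.mul_right_inj two_ne_zero ENNReal.ofNat_ne_top, hequal]
    refine Filter.eventually_congr ?_
    filter_upwards [hmem] with p hp
    have hr : 0 < √(p * (1 - p)) := sqrt_pos.mpr (hpq_pos p hp)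
    rw [eq_div_iff (by positivity), div_eq_iff hr.ne']
    constructor <;> intro h <;> linarith
  · filter_upwards [hopt, hmem] with p hfp hp using
      div_mul_eq_of_eq_div_mul_sqrt (hp_pos p hp) (hf_pos p hp) hfp

/-- for fixed `s = p·f·g1`, the functional
`ν[s,f] = 2·∫_t^{1/2} s(p)²/(p(1-p)·f(p)) dp` over normalized densities `f`
(`∫_t^{1/2} f = 1/2`) satisfies `ν[s,f] ≥ 4·I²` with
`I = ∫_t^{1/2} s(p)/√(p(1-p)) dp ∈ (0,∞)`, with equality iff
`f(p) = s(p)/(2I√(p(1-p)))` a.e.; in the equality case the accusation function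
`g1(p) = s(p)/(p·f(p))` equals `2I·√((1-p)/p)` a.e., a positive multiple of
Tardos' `g1^T(p) = √((1-p)/p)`. -/
theorem nu_ge_and_optimal_g1
    (t : ℝ) (ht : t ∈ Set.Ioo (0:ℝ) (1/2))
    (s : ℝ → ℝ) (hs_meas : Measurable s)
    (hs_nonneg : ∀ p ∈ Set.Icc t (1/2 : ℝ), 0 ≤ s p)
    (I : ℝ) (hI : I = ∫ p in Set.Icc t (1/2 : ℝ), s p / Real.sqrt (p * (1 - p)))
    (hI_pos : 0 < I)
    (f : ℝ → ℝ) (hf_meas : Measurable f)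
    (hf_pos : ∀ p ∈ Set.Icc t (1/2 : ℝ), 0 < f p)
    (hf_norm : (∫ p in Set.Icc t (1/2 : ℝ), f p) = 1/2) :
    ENNReal.ofReal (4 * I ^ 2)
      ≤ 2 * ∫⁻ p in Set.Icc t (1/2 : ℝ), ENNReal.ofReal (s p ^ 2 / (p * (1 - p) * f p))
    ∧ ((2 * ∫⁻ p in Set.Icc t (1/2 : ℝ), ENNReal.ofReal (s p ^ 2 / (p * (1 - p) * f p)))
          = ENNReal.ofReal (4 * I ^ 2)
        ↔ (∀ᵐ p ∂(volume.restrict (Set.Icc t (1/2 : ℝ))),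
            f p = s p / (2 * I * Real.sqrt (p * (1 - p)))))
    ∧ ((∀ᵐ p ∂(volume.restrict (Set.Icc t (1/2 : ℝ))),
          f p = s p / (2 * I * Real.sqrt (p * (1 - p)))) →
        (∀ᵐ p ∂(volume.restrict (Set.Icc t (1/2 : ℝ))),
          s p / (p * f p) = 2 * I * Real.sqrt ((1 - p) / p))) :=
  nu_ge_and_optimal_g1_general t ht s hs_nonneg I hI hI_pos f hf_pos hf_norm
end

section
/- For every real number u with u ≤ 1.7, one has e^u ≤ 1 + u + u². -/
/-!
For `u ≤ 0` this follows from `e^u ≤ 1 / (1 - u)` and `(1 - u)(1 + u + u²) = 1 - u³ ≥ 1`.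
For `0 < u ≤ 1.7`, write `e^u = (e^{u/2})²`; since `u/2 ≤ 1`, the degree-three Taylor bound
`e^x ≤ 1 + x + x²/2 + 2x³/9` applies, and squaring it leaves a polynomial inequality with a
small margin at `u = 1.7` (where `e^u ≈ 5.474` against `1 + u + u² = 5.59`).
-/

open Real

lemma exp_le_one_add_add_sq_of_nonpos {u : ℝ} (hu : u ≤ 0) : exp u ≤ 1 + u + u ^ 2 := by
  have h1u : 0 < 1 - u := by linarith
  calc exp u = (exp (-u))⁻¹ := by rw [exp_neg, inv_inv]
    _ ≤ (1 - u)⁻¹ := inv_anti₀ h1u (one_sub_le_exp_neg u)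
    _ ≤ 1 + u + u ^ 2 := by
      rw [inv_le_iff_one_le_mul₀ h1u]
      nlinarith [pow_two_nonneg u, mul_nonneg (pow_two_nonneg u) (neg_nonneg.2 hu)]

lemma exp_le_cubic_of_nonneg_of_le_one {x : ℝ} (h0 : 0 ≤ x) (h1 : x ≤ 1) :
    exp x ≤ 1 + x + x ^ 2 / 2 + 2 / 9 * x ^ 3 := by
  convert exp_bound' h0 h1 (n := 3) (by norm_num) using 1
  simp only [Finset.sum_range_succ, Finset.sum_range_zero, Nat.factorial]
  push_cast
  ring

lemma sq_cubic_half_le_one_add_add_sq {u : ℝ} (h0 : 0 ≤ u) (h1 : u ≤ 1.7) :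
    (1 + u / 2 + (u / 2) ^ 2 / 2 + 2 / 9 * (u / 2) ^ 3) ^ 2 ≤ 1 + u + u ^ 2 := by
  have h1' : 0 ≤ 1.7 - u := sub_nonneg.2 h1
  nlinarith [mul_nonneg (pow_two_nonneg u) h1', mul_nonneg (mul_nonneg h0 (pow_two_nonneg u)) h1',
    mul_nonneg (pow_two_nonneg (u ^ 2)) h1', mul_nonneg (mul_nonneg h0 (pow_two_nonneg (u ^ 2))) h1']

/-- For every real number `u` with `u ≤ 1.7`, one has `e^u ≤ 1 + u + u²`. -/
theorem exp_le_one_add_add_sq_of_le (u : ℝ) (hu : u ≤ 1.7) :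
    Real.exp u ≤ 1 + u + u ^ 2 := by
  rcases le_or_gt u 0 with hneg | hpos
  · exact exp_le_one_add_add_sq_of_nonpos hneg
  calc exp u = exp (u / 2) ^ 2 := by rw [← exp_nat_mul]; push_cast; ring_nf
    _ ≤ (1 + u / 2 + (u / 2) ^ 2 / 2 + 2 / 9 * (u / 2) ^ 3) ^ 2 :=
      pow_le_pow_left₀ (exp_pos _).le
        (exp_le_cubic_of_nonneg_of_le_one (by positivity) (by linarith)) 2
    _ ≤ 1 + u + u ^ 2 := sq_cubic_half_le_one_add_add_sq hpos.le hu
end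

section
/- Let t ∈ (0,1) and let c ≥ 1 be an integer, and let ψ: {0,1,…,c} → [0,1] satisfy ψ(0) = 0 and ψ(c) = 1. Then (1−t)^c − t^c + Σ_{x=1}^{c−1} C(c,x)·ψ(x)·((1−t)^x·t^{c−x} − t^x·(1−t)^{c−x}) ≥ 2·(1−t)^c − 1. Moreover, if t ∈ (0,1/2) and c·t < 1/2, then (2·(1−t)^c − 1)/(π − 4·arcsin(√t)) > (1 − 2·c·t)/π. -/
/-!
The coalition can only lose accusation mass in the interior columns `0 < x < c`, and there at
most the weight `C(c,x) t^x (1-t)^(c-x)` of the negative term. By the binomial theorem these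
weights add up to `1 - t^c - (1-t)^c`, which gives the first bound. For the second, Bernoulli's
inequality gives `2(1-t)^c - 1 ≥ 1 - 2ct > 0`, while `0 < t < 1/2` puts `arcsin √t` in
`(0, π/4)`, so the denominator `π - 4 arcsin √t` lies in `(0, π)`.
-/

open Real Finset

theorem sum_Ioo_pow_mul_pow_mul_choose {R : Type*} [CommRing R] (a b : R) {n : ℕ} (hn : 0 < n) :
    ∑ x ∈ Ioo 0 n, a ^ x * b ^ (n - x) * (n.choose x : R) = (a + b) ^ n - a ^ n - b ^ n := by
  rw [add_pow, sum_range_succ, sum_range_eq_add_Ico _ hn, ← zero_add 1, Ico_add_one_left_eq_Ioo]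
  simp

theorem neg_le_mul_sub_of_mem_Icc {R : Type*} [CommRing R] [LinearOrder R]
    [IsStrictOrderedRing R] {ψ a b : R} (hψ : ψ ∈ Set.Icc 0 1) (ha : 0 ≤ a) (hb : 0 ≤ b) :
    -b ≤ ψ * (a - b) := by
  nlinarith [mul_nonneg hψ.1 ha, mul_le_of_le_one_left hb hψ.2]

theorem two_mul_pow_sub_one_le_coalition_sum {t : ℝ} (ht0 : 0 ≤ t) (ht1 : t ≤ 1) {c : ℕ}
    (hc : 1 ≤ c) {ψ : ℕ → ℝ} (hψ : ∀ x ∈ Ioo 0 c, ψ x ∈ Set.Icc 0 1) :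
    2 * (1 - t) ^ c - 1 ≤ (1 - t) ^ c - t ^ c
      + ∑ x ∈ Ioo 0 c,
          (c.choose x : ℝ) * ψ x * ((1 - t) ^ x * t ^ (c - x) - t ^ x * (1 - t) ^ (c - x)) := by
  have hweights := sum_Ioo_pow_mul_pow_mul_choose t (1 - t) hc
  rw [add_sub_cancel, one_pow] at hweights
  have hterm : ∀ x ∈ Ioo 0 c, -(t ^ x * (1 - t) ^ (c - x) * (c.choose x : ℝ))
      ≤ (c.choose x : ℝ) * ψ x * ((1 - t) ^ x * t ^ (c - x) - t ^ x * (1 - t) ^ (c - x)) := by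
    intro x hx
    have hloss := neg_le_mul_sub_of_mem_Icc (hψ x hx)
      (by positivity : 0 ≤ (1 - t) ^ x * t ^ (c - x))
      (by positivity : 0 ≤ t ^ x * (1 - t) ^ (c - x))
    calc -(t ^ x * (1 - t) ^ (c - x) * (c.choose x : ℝ))
        = (c.choose x : ℝ) * -(t ^ x * (1 - t) ^ (c - x)) := by ring
      _ ≤ (c.choose x : ℝ) * (ψ x * ((1 - t) ^ x * t ^ (c - x) - t ^ x * (1 - t) ^ (c - x))) :=
        mul_le_mul_of_nonneg_left hloss (Nat.cast_nonneg _)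
      _ = _ := by ring
  have hsum := sum_le_sum hterm
  rw [sum_neg_distrib, hweights] at hsum
  linarith

theorem arcsin_sqrt_lt_pi_div_four {t : ℝ} (ht : t < 1 / 2) : arcsin √t < π / 4 := by
  rw [arcsin_lt_iff_lt_sin' ⟨by linarith [pi_pos], by linarith [pi_pos]⟩, sin_pi_div_four,
    sqrt_lt' (by positivity), div_pow, sq_sqrt zero_le_two]
  linarith

theorem pi_sub_four_mul_arcsin_sqrt_mem_Ioo {t : ℝ} (ht0 : 0 < t) (ht : t < 1 / 2) :
    π - 4 * arcsin √t ∈ Set.Ioo 0 π := by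
  have hpos : 0 < arcsin √t := arcsin_pos.2 (sqrt_pos.2 ht0)
  have hlt := arcsin_sqrt_lt_pi_div_four ht
  constructor <;> linarith

theorem one_sub_two_mul_le_two_mul_one_sub_pow_sub_one {t : ℝ} (ht : t ≤ 2) (c : ℕ) :
    1 - 2 * (c : ℝ) * t ≤ 2 * (1 - t) ^ c - 1 := by
  have hbernoulli := one_add_mul_sub_le_pow (by linarith : -1 ≤ 1 - t) c
  linarith

theorem coalition_mean_lower_bound_general
    (t : ℝ) (ht : t ∈ Set.Ioo (0:ℝ) 1) (c : ℕ) (hc : 1 ≤ c)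
    (ψ : ℕ → ℝ) (hψ : ∀ x ≤ c, ψ x ∈ Set.Icc (0:ℝ) 1) :
    (2 * (1-t) ^ c - 1
      ≤ (1-t) ^ c - t ^ c
        + ∑ x ∈ Finset.Ioo 0 c,
            (c.choose x : ℝ) * ψ x * ((1-t) ^ x * t ^ (c-x) - t ^ x * (1-t) ^ (c-x)))
    ∧ (t < 1/2 → (c : ℝ) * t < 1/2 →
        (1 - 2 * (c : ℝ) * t) / π
          < (2 * (1-t) ^ c - 1) / (π - 4 * Real.arcsin (Real.sqrt t))) := by
  refine ⟨two_mul_pow_sub_one_le_coalition_sum ht.1.le ht.2.le hc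
    (fun x hx => hψ x (mem_Ioo.1 hx).2.le), fun ht2 hct => ?_⟩
  obtain ⟨hden_pos, hden_lt_pi⟩ := pi_sub_four_mul_arcsin_sqrt_mem_Ioo ht.1 ht2
  have hnum := one_sub_two_mul_le_two_mul_one_sub_pow_sub_one (by linarith : t ≤ 2) c
  exact div_lt_div₀' hnum hden_lt_pi (by linarith) hden_pos

/-- for any response function `ψ` with `ψ 0 = 0`, `ψ c = 1` and values in
`[0,1]`, the per-column expected coalition accusation numerator satisfies
`(1-t)^c - t^c + Σ_{x=1}^{c-1} C(c,x)·ψ(x)·((1-t)^x·t^{c-x} - t^x·(1-t)^{c-x})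
  ≥ 2·(1-t)^c - 1`; moreover if `t < 1/2` and `c·t < 1/2` then
`(2·(1-t)^c - 1)/(π - 4·arcsin √t) > (1 - 2·c·t)/π`. -/
theorem coalition_mean_lower_bound
    (t : ℝ) (ht : t ∈ Set.Ioo (0:ℝ) 1) (c : ℕ) (hc : 1 ≤ c)
    (ψ : ℕ → ℝ) (hψ : ∀ x ≤ c, ψ x ∈ Set.Icc (0:ℝ) 1)
    (hψ0 : ψ 0 = 0) (hψc : ψ c = 1) :
    (2 * (1-t) ^ c - 1
      ≤ (1-t) ^ c - t ^ c
        + ∑ x ∈ Finset.Ioo 0 c,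
            (c.choose x : ℝ) * ψ x * ((1-t) ^ x * t ^ (c-x) - t ^ x * (1-t) ^ (c-x)))
    ∧ (t < 1/2 → (c : ℝ) * t < 1/2 →
        (1 - 2 * (c : ℝ) * t) / π
          < (2 * (1-t) ^ c - 1) / (π - 4 * Real.arcsin (Real.sqrt t))) :=
  coalition_mean_lower_bound_general t ht c hc ψ hψ
end

section
/- Let p ∈ (0,1), let g1: (0,1) → ℝ be positive, and set g0(p) = −p·g1(p)/(1−p). Let X be Bernoulli with P[X = 1] = p and set U = g1(p) if X = 1, U = g0(p) if X = 0. Then E[U] = 0, and for every α > 0 with α·g1(p) ≤ 1.7: E[e^{α·U}] ≤ 1 + α²·(p·g1(p)² + (1−p)·g0(p)²). -/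
/-!
The pointwise inequality `e^u ≤ 1 + u + u²` holds for `u ≤ 1.7` (it fails just below
`u = 1.8`). Integrating it against a centred random variable bounded above by `1.7` kills the
linear term, so `E[e^X] ≤ 1 + E[X²]`. The accusation value `α U` is centred because
`p g1(p) + (1 - p) g0(p) = 0`, and bounded above by `1.7` because `g0(p) ≤ 0 < g1(p)`.
-/

open MeasureTheory Real

noncomputable section

namespace Real

theorem exp_le_one_add_add_sq_of_nonpos {u : ℝ} (hu : u ≤ 0) : exp u ≤ 1 + u + u ^ 2 := by
  have hinv : exp u * (1 - u) ≤ 1 := by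
    calc exp u * (1 - u) ≤ exp u * exp (-u) := by gcongr; linarith [add_one_le_exp (-u)]
      _ = 1 := by rw [← exp_add, add_neg_cancel, exp_zero]
  -- `(1 - u) (1 + u + u²) = 1 - u³ ≥ 1`
  nlinarith [exp_pos u, pow_two_nonneg u]

theorem exp_le_one_add_add_sq_of_nonneg {u : ℝ} (h0 : 0 ≤ u) (hu : u ≤ 1.7) :
    exp u ≤ 1 + u + u ^ 2 := by
  -- `exp_bound'` needs its argument in `[0, 1]`, so bound `exp (u / 2)` and square.
  obtain ⟨y, rfl⟩ : ∃ y, u = 2 * y := ⟨u / 2, by ring⟩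
  have hy0 : 0 ≤ y := by linarith
  have hy1 : y ≤ 0.85 := by linarith
  have htaylor : exp y ≤ 1 + y + y ^ 2 / 2 + y ^ 3 / 6 + y ^ 4 / 24 + y ^ 5 / 100 := by
    convert exp_bound' hy0 (by linarith) (n := 5) (by norm_num) using 1
    simp [Finset.sum_range_succ, Nat.factorial]
    ring
  rw [two_mul, exp_add]
  nlinarith [exp_pos y, pow_nonneg hy0 3, mul_nonneg (pow_nonneg hy0 3) (sub_nonneg.2 hy1),
    mul_nonneg (pow_nonneg hy0 4) (sub_nonneg.2 hy1)]

theorem exp_le_one_add_add_sq_s18 {u : ℝ} (hu : u ≤ 1.7) : exp u ≤ 1 + u + u ^ 2 :=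
  (le_total u 0).elim exp_le_one_add_add_sq_of_nonpos (exp_le_one_add_add_sq_of_nonneg · hu)

end Real

theorem integral_exp_le_one_add_integral_sq {Ω : Type*} [MeasurableSpace Ω] {μ : Measure Ω}
    [IsProbabilityMeasure μ] {X : Ω → ℝ} (hX : Integrable X μ)
    (hX2 : Integrable (fun ω ↦ X ω ^ 2) μ)
    (hle : ∀ᵐ ω ∂μ, X ω ≤ 1.7) (hmean : ∫ ω, X ω ∂μ = 0) :
    ∫ ω, exp (X ω) ∂μ ≤ 1 + ∫ ω, X ω ^ 2 ∂μ := by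
  have h1X : Integrable (fun ω ↦ 1 + X ω) μ := (integrable_const 1).add hX
  calc ∫ ω, exp (X ω) ∂μ ≤ ∫ ω, 1 + X ω + X ω ^ 2 ∂μ :=
        integral_mono_of_nonneg (ae_of_all _ fun _ ↦ (exp_pos _).le)
          (h1X.add hX2) (hle.mono fun _ ↦ exp_le_one_add_add_sq_s18)
    _ = 1 + ∫ ω, X ω ^ 2 ∂μ := by
        rw [integral_add h1X hX2, integral_add (integrable_const 1) hX,
          hmean, integral_const, probReal_univ, one_smul, add_zero]

theorem isProbabilityMeasure_bern_s18 {p : ℝ} (hp0 : 0 ≤ p) (hp1 : p ≤ 1) :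
    IsProbabilityMeasure (bern p) := by
  constructor
  simp [bern, ← ENNReal.ofReal_add hp0 (sub_nonneg.2 hp1)]

theorem integral_bern {p : ℝ} (hp0 : 0 ≤ p) (hp1 : p ≤ 1) (f : Bool → ℝ) :
    ∫ b, f b ∂bern p = p * f true + (1 - p) * f false := by
  have := isProbabilityMeasure_bern_s18 hp0 hp1
  rw [integral_fintype .of_finite]
  simp [Measure.real, bern, hp0, hp1]

/-- single-column moment bound. For `p ∈ (0,1)`, `g1` positive on `(0,1)`,
`g0 p = -p·g1 p/(1-p)`, and `U = g1 p` (if `X = 1`) or `g0 p` (if `X = 0`) with `X`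
Bernoulli(`p`): `E[U] = 0`, and for every `α > 0` with `α·g1 p ≤ 1.7`,
`E[e^{α·U}] ≤ 1 + α²·(p·g1 p² + (1-p)·g0 p²)`. -/
theorem single_column_mgf_bound
    (p : ℝ) (hp : p ∈ Set.Ioo (0:ℝ) 1)
    (g1 : ℝ → ℝ) (hg1_pos : ∀ q ∈ Set.Ioo (0:ℝ) 1, 0 < g1 q)
    (g0 : ℝ → ℝ) (hg0 : ∀ q, g0 q = - q * g1 q / (1 - q))
    (U : Bool → ℝ) (hU : ∀ b, U b = if b then g1 p else g0 p) :
    (∫ b, U b ∂(bern p)) = 0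
    ∧ (∀ α : ℝ, 0 < α → α * g1 p ≤ 1.7 →
        (∫ b, Real.exp (α * U b) ∂(bern p))
          ≤ 1 + α ^ 2 * (p * g1 p ^ 2 + (1-p) * g0 p ^ 2)) := by
  obtain ⟨hp0, hp1⟩ := hp
  have := isProbabilityMeasure_bern_s18 hp0.le hp1.le
  have hU1 : U true = g1 p := hU true
  have hU0 : U false = g0 p := hU false
  have hmean : p * g1 p + (1 - p) * g0 p = 0 := by
    rw [hg0 p]
    field_simp [sub_ne_zero.2 hp1.ne']
    ring
  have hg0_nonpos : g0 p ≤ 0 := by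
    rw [hg0 p, neg_mul, neg_div]
    exact neg_nonpos.2 (by have := hg1_pos p ⟨hp0, hp1⟩; positivity)
  have hmeanU : ∫ b, U b ∂bern p = 0 := by
    rw [integral_bern hp0.le hp1.le, hU1, hU0, hmean]
  refine ⟨hmeanU, fun α hα hαg1 ↦ ?_⟩
  calc ∫ b, exp (α * U b) ∂bern p ≤ 1 + ∫ b, (α * U b) ^ 2 ∂bern p := by
        refine integral_exp_le_one_add_integral_sq .of_finite .of_finite (ae_of_all _ ?_) ?_
        · refine Bool.forall_bool.2 ⟨?_, hU1 ▸ hαg1⟩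
          rw [hU0]
          nlinarith
        · rw [integral_const_mul, hmeanU, mul_zero]
    _ = 1 + α ^ 2 * (p * g1 p ^ 2 + (1 - p) * g0 p ^ 2) := by
        rw [integral_bern hp0.le hp1.le, hU1, hU0]
        ring

end
end

section
/- Fix τ ∈ (0,1/2) and ε1, ε2 ∈ (0,1/2) with ε1 ≤ (1/2)·Erfc(1/2). Then there exists an integer c0* (depending on ε1, ε2, τ) such that for every integer c0 ≥ c0*, setting m = ⌈(2π²/(1−2τ)²)·c0²·ln(1/(ε1·√(2π)))⌉, there exists a threshold Z with the following property: for every Gaussian random variable W with mean 0 and variance v1 ∈ (0, m], and every Gaussian random variable V with mean μ ≥ (1−2τ)·m/π and variance v2 ∈ (0, c0·m], one has P[W > Z] ≤ ε1 and P[V ≤ c0·Z] ≤ ε2. -/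
/-!
The standard Gaussian tail satisfies the Mills-ratio bound
`P[N(0,1) ≥ x] ≤ e^{-x²/2} / (x√(2π))`, and by an affine change of variables every Gaussian tail
beyond `x` standard deviations obeys the same bound.

Put `K = √(2 ln (1/(ε1√(2π))))`, so that the bound at `K` is `ε1 / K`. A lower bound
`∫₀^{1/2} e^{-s²} ≥ 11/24` gives `(1/2)·Erfc(1/2)·√(2π) < e^{-1/2}`, hence `K > 1`, and by
continuity the bound is still below `ε1` at some `x1 < K`. The threshold is `Z = x1√m`, so an
innocent user is accused with probability at most `ε1`. The choice of `m` makes the coalition mean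
at least `c0·K·√m`, so `V` must fall `c0(K - x1)√m` below its mean to stay under `c0·Z`; this is
at least `ε2⁻¹` standard deviations `√(c0·m)` as soon as `c0 ≥ (ε2⁻¹/(K - x1))²`, and the Mills
bound at `ε2⁻¹` is at most `ε2`.
-/

open MeasureTheory ProbabilityTheory Real

noncomputable section

/-- The complementary error function `Erfc x = (2/√π)·∫_x^∞ e^{-s²} ds`. -/
def Erfc (x : ℝ) : ℝ := (2 / Real.sqrt π) * ∫ s in Set.Ioi x, Real.exp (-s ^ 2)

open Filter Set Topology
open scoped NNReal

def gaussianTailBound (x : ℝ) : ℝ := exp (-x ^ 2 / 2) / (x * √(2 * π))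

lemma one_le_sqrt_two_mul_pi : 1 ≤ √(2 * π) :=
  one_le_sqrt.2 (by linarith [pi_gt_three])

lemma gaussianTailBound_le_inv {x : ℝ} (hx : 0 < x) : gaussianTailBound x ≤ x⁻¹ := by
  rw [gaussianTailBound, div_le_iff₀ (by positivity), inv_mul_eq_div,
    le_div_iff₀ hx, mul_comm]
  have : exp (-x ^ 2 / 2) ≤ 1 := exp_le_one_iff.2 (by nlinarith)
  nlinarith [one_le_sqrt_two_mul_pi, exp_pos (-x ^ 2 / 2)]

lemma exists_mem_Ioo_gaussianTailBound_lt {K ε : ℝ} (hK : 0 < K)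
    (h : gaussianTailBound K < ε) : ∃ x ∈ Ioo 0 K, gaussianTailBound x < ε := by
  have hc : ContinuousAt gaussianTailBound K := by
    unfold gaussianTailBound
    exact ContinuousAt.div (by fun_prop) (by fun_prop) (by positivity)
  obtain ⟨x, hxε, hx⟩ := ((hc.eventually (gt_mem_nhds h)).filter_mono nhdsWithin_le_nhds).and
    (Ioo_mem_nhdsLT hK) |>.exists
  exact ⟨x, hx, hxε⟩

lemma gaussianTailBound_sqrt_two_mul_log {ε : ℝ} (hε : 0 < ε)
    (hL : 0 ≤ log (1 / (ε * √(2 * π)))) :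
    gaussianTailBound √(2 * log (1 / (ε * √(2 * π))))
      = ε / √(2 * log (1 / (ε * √(2 * π)))) := by
  have hexp : exp (-√(2 * log (1 / (ε * √(2 * π)))) ^ 2 / 2) = ε * √(2 * π) := by
    rw [sq_sqrt (by positivity), neg_div, mul_div_cancel_left₀ _ two_ne_zero, one_div, log_inv,
      neg_neg, exp_log (by positivity)]
  rw [gaussianTailBound, hexp]
  field_simp

lemma integrable_mul_exp_neg_sq_div_two : Integrable fun y : ℝ ↦ y * exp (-y ^ 2 / 2) := by
  convert integrable_mul_exp_neg_mul_sq (b := 1 / 2) (by norm_num) using 4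
  ring

lemma integral_Ioi_mul_exp_neg_sq_div_two (x : ℝ) :
    ∫ y in Ioi x, y * exp (-y ^ 2 / 2) = exp (-x ^ 2 / 2) := by
  have hderiv (y : ℝ) (_ : y ∈ Ici x) :
      HasDerivAt (fun y ↦ -exp (-y ^ 2 / 2)) (y * exp (-y ^ 2 / 2)) y := by
    have h : HasDerivAt (fun y : ℝ ↦ -y ^ 2 / 2) (-y) y :=
      ((hasDerivAt_pow 2 y).fun_neg.div_const 2).congr_deriv (by ring)
    exact h.exp.fun_neg.congr_deriv (by ring)
  have hlim : Tendsto (fun y : ℝ ↦ -exp (-y ^ 2 / 2)) atTop (𝓝 (-0)) := by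
    refine (tendsto_exp_atBot.comp ?_).neg
    refine (tendsto_neg_atTop_atBot.comp
      ((tendsto_pow_atTop two_ne_zero).atTop_div_const two_pos)).congr fun y ↦ ?_
    simp [neg_div]
  rw [integral_Ioi_of_hasDerivAt_of_tendsto' hderiv
    integrable_mul_exp_neg_sq_div_two.integrableOn hlim]
  ring

lemma gaussianReal_zero_one_Ici_le {x : ℝ} (hx : 0 < x) :
    gaussianReal 0 1 (Ici x) ≤ ENNReal.ofReal (gaussianTailBound x) := by
  rw [gaussianReal_apply_eq_integral 0 one_ne_zero]
  refine ENNReal.ofReal_le_ofReal ?_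
  have hpdf (y : ℝ) : gaussianPDFReal 0 1 y = exp (-y ^ 2 / 2) / √(2 * π) := by
    simp [gaussianPDFReal, div_eq_inv_mul]
  calc ∫ y in Ici x, gaussianPDFReal 0 1 y
      ≤ ∫ y in Ici x, y * exp (-y ^ 2 / 2) / (x * √(2 * π)) := by
        refine setIntegral_mono_on (integrable_gaussianPDFReal 0 1).integrableOn ?_
          measurableSet_Ici fun y (hy : x ≤ y) ↦ ?_
        · exact (integrable_mul_exp_neg_sq_div_two.div_const _).integrableOn
        · have hc : 0 < √(2 * π) := by positivity
          rw [hpdf, div_le_div_iff₀ hc (by positivity)]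
          nlinarith [mul_nonneg (mul_nonneg (sub_nonneg.2 hy) (exp_pos (-y ^ 2 / 2)).le) hc.le]
    _ = gaussianTailBound x := by
        rw [integral_div, integral_Ici_eq_integral_Ioi, integral_Ioi_mul_exp_neg_sq_div_two,
          gaussianTailBound]

lemma gaussianReal_zero_one_map_const_add_sqrt_mul (μ : ℝ) (v : ℝ≥0) :
    (gaussianReal 0 1).map (fun y ↦ μ + √v * y) = gaussianReal μ v := by
  have : (fun y ↦ μ + √v * y) = (μ + ·) ∘ (√v * ·) := rfl
  rw [this, ← Measure.map_map (by fun_prop) (by fun_prop), gaussianReal_map_const_mul,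
    gaussianReal_map_const_add]
  congr 1
  · simp
  · ext; simp

lemma gaussianReal_Ici_le (μ : ℝ) {v : ℝ≥0} (hv : v ≠ 0) {x : ℝ} (hx : 0 < x) :
    gaussianReal μ v (Ici (μ + x * √v)) ≤ ENNReal.ofReal (gaussianTailBound x) := by
  have hpre : (fun y ↦ μ + √v * y) ⁻¹' Ici (μ + x * √v) = Ici x := by
    ext y
    simp [mul_comm x, mul_le_mul_iff_right₀ (sqrt_pos.2 (NNReal.coe_pos.2 hv.bot_lt))]
  rw [← gaussianReal_zero_one_map_const_add_sqrt_mul, Measure.map_apply (by fun_prop)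
    measurableSet_Ici, hpre]
  exact gaussianReal_zero_one_Ici_le hx

lemma gaussianReal_Iic_le (μ : ℝ) {v : ℝ≥0} (hv : v ≠ 0) {x : ℝ} (hx : 0 < x) :
    gaussianReal μ v (Iic (μ - x * √v)) ≤ ENNReal.ofReal (gaussianTailBound x) := by
  have hpre : (fun y ↦ -y) ⁻¹' Ici (-μ + x * √v) = Iic (μ - x * √v) := by
    ext y
    simp only [mem_preimage, mem_Ici, mem_Iic]
    constructor <;> intro h <;> linarith
  rw [← hpre, ← Measure.map_apply measurable_neg measurableSet_Ici, gaussianReal_map_neg]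
  exact gaussianReal_Ici_le (-μ) hv hx

section RandomVariable

variable {Ω : Type*} [MeasurableSpace Ω] {P : Measure Ω} {X : Ω → ℝ} {μ : ℝ} {v : ℝ≥0}
  {x w z : ℝ}

lemma measure_lt_le_gaussianTailBound (hX : P.map X = gaussianReal μ v) (hv : v ≠ 0)
    (hx : 0 < x) (hvw : (v : ℝ) ≤ w) (hz : μ + x * √w ≤ z) :
    P {ω | z < X ω} ≤ ENNReal.ofReal (gaussianTailBound x) := by
  have hXm : AEMeasurable X P := aemeasurable_of_map_neZero (by rw [hX]; infer_instance)
  calc P {ω | z < X ω} = gaussianReal μ v (Ioi z) := by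
        rw [← hX, Measure.map_apply_of_aemeasurable hXm measurableSet_Ioi]; rfl
    _ ≤ gaussianReal μ v (Ici (μ + x * √v)) := by
        refine measure_mono fun y (hy : z < y) ↦ ?_
        have : x * √v ≤ x * √w := by gcongr
        simp only [mem_Ici]
        linarith
    _ ≤ _ := gaussianReal_Ici_le μ hv hx

lemma measure_le_le_gaussianTailBound (hX : P.map X = gaussianReal μ v) (hv : v ≠ 0)
    (hx : 0 < x) (hvw : (v : ℝ) ≤ w) (hz : z ≤ μ - x * √w) :
    P {ω | X ω ≤ z} ≤ ENNReal.ofReal (gaussianTailBound x) := by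
  have hXm : AEMeasurable X P := aemeasurable_of_map_neZero (by rw [hX]; infer_instance)
  calc P {ω | X ω ≤ z} = gaussianReal μ v (Iic z) := by
        rw [← hX, Measure.map_apply_of_aemeasurable hXm measurableSet_Iic]; rfl
    _ ≤ gaussianReal μ v (Iic (μ - x * √v)) := by
        refine measure_mono fun y (hy : y ≤ z) ↦ ?_
        have : x * √v ≤ x * √w := by gcongr
        simp only [mem_Iic]
        linarith
    _ ≤ _ := gaussianReal_Iic_le μ hv hx

end RandomVariable

lemma integrable_exp_neg_sq : Integrable fun s : ℝ ↦ exp (-s ^ 2) := by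
  simpa using integrable_exp_neg_mul_sq one_pos

lemma eleven_div_twenty_four_le_integral_exp_neg_sq :
    11 / 24 ≤ ∫ s in (0 : ℝ)..1 / 2, exp (-s ^ 2) := by
  have hpoly : ∫ s in (0 : ℝ)..1 / 2, (1 - s ^ 2) = 11 / 24 := by
    norm_num [intervalIntegral.integral_sub, integral_pow]
  rw [← hpoly]
  exact intervalIntegral.integral_mono_on (by norm_num)
    (Continuous.intervalIntegrable (by fun_prop) _ _)
    (Continuous.intervalIntegrable (by fun_prop) _ _)
    fun s _ ↦ by linarith [add_one_le_exp (-s ^ 2)]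

lemma integral_Ioi_half_exp_neg_sq_le :
    ∫ s in Ioi (1 / 2 : ℝ), exp (-s ^ 2) ≤ √π / 2 - 11 / 24 := by
  have hsplit : (∫ s in (0 : ℝ)..1 / 2, exp (-s ^ 2)) + ∫ s in Ioi (1 / 2 : ℝ), exp (-s ^ 2)
      = √π / 2 := by
    rw [intervalIntegral.integral_of_le (by norm_num), ← setIntegral_union
      (Ioc_disjoint_Ioi le_rfl) measurableSet_Ioi integrable_exp_neg_sq.integrableOn
      integrable_exp_neg_sq.integrableOn, Ioc_union_Ioi_eq_Ioi (by norm_num)]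
    simpa using integral_gaussian_Ioi 1
  linarith [eleven_div_twenty_four_le_integral_exp_neg_sq]

lemma half_Erfc_half_mul_sqrt_two_pi_lt : 1 / 2 * Erfc (1 / 2) * √(2 * π) < exp (-(1 / 2)) := by
  have hπ : 0 < √π := sqrt_pos.2 pi_pos
  have hErfc : 1 / 2 * Erfc (1 / 2) * √(2 * π) = √2 * ∫ s in Ioi (1 / 2 : ℝ), exp (-s ^ 2) := by
    rw [Erfc, sqrt_mul zero_le_two]
    field_simp
  have hsqrtπ : √π < 1.7725 := (sqrt_lt' (by norm_num)).2 (by nlinarith [pi_lt_d6])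
  have hsqrt2 : √2 < 1.41422 := (sqrt_lt' (by norm_num)).2 (by norm_num)
  have hexp : 0.606 < exp (-(1 / 2)) := by
    have h : exp (-(1 / 2)) ^ 2 = (exp 1)⁻¹ := by
      rw [← exp_nat_mul, ← exp_neg]; norm_num
    have : (0.606 : ℝ) ^ 2 < exp (-(1 / 2)) ^ 2 := by
      rw [h, lt_inv_comm₀ (by norm_num) (exp_pos 1)]
      linarith [exp_one_lt_d9]
    exact lt_of_pow_lt_pow_left₀ 2 (exp_pos _).le this
  rw [hErfc]
  nlinarith [integral_Ioi_half_exp_neg_sq_le, sqrt_nonneg 2]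

lemma one_half_lt_log_of_le_half_Erfc_half {ε : ℝ} (hε : 0 < ε) (h : ε ≤ 1 / 2 * Erfc (1 / 2)) :
    1 / 2 < log (1 / (ε * √(2 * π))) := by
  have hlt : ε * √(2 * π) < exp (-(1 / 2)) :=
    (mul_le_mul_of_nonneg_right h (sqrt_nonneg _)).trans_lt half_Erfc_half_mul_sqrt_two_pi_lt
  rw [one_div (ε * _), log_inv, lt_neg, ← log_exp (-(1 / 2))]
  exact log_lt_log (by positivity) hlt

lemma le_sqrt_mul_of_div_sq_le {x y c : ℝ} (hy : 0 < y) (h : (x / y) ^ 2 ≤ c) : x ≤ √c * y :=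
  (div_le_iff₀ hy).1 ((le_abs_self _).trans (abs_le_sqrt h))

lemma mul_sqrt_two_mul_mul_sqrt_le {a b c L m : ℝ} (ha : 0 < a) (hb : 0 < b) (hc : 0 ≤ c)
    (hL : 0 ≤ L) (hm : 2 * b ^ 2 / a ^ 2 * c ^ 2 * L ≤ m) : c * √(2 * L) * √m ≤ a * m / b := by
  have hm0 : 0 ≤ m := le_trans (by positivity) hm
  have hm' : 2 * b ^ 2 * c ^ 2 * L ≤ a ^ 2 * m := by
    rw [div_mul_eq_mul_div, div_mul_eq_mul_div, div_le_iff₀ (by positivity)] at hm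
    linarith
  rw [← pow_le_pow_iff_left₀ (by positivity) (by positivity) two_ne_zero, mul_pow, mul_pow,
    sq_sqrt (by positivity), sq_sqrt hm0, div_pow, le_div_iff₀ (by positivity)]
  nlinarith [mul_le_mul_of_nonneg_right hm' hm0]

/-- in the Gaussian approximation, for fixed `τ ∈ (0,1/2)` and
`ε1, ε2 ∈ (0,1/2)` with `ε1 ≤ (1/2)·Erfc (1/2)`, there is a `c0*` such that for all
`c0 ≥ c0*`, with code length `m = ⌈(2π²/(1-2τ)²)·c0²·ln (1/(ε1·√(2π)))⌉` there is a
threshold `Z` such that every Gaussian `W` with mean `0` and variance `v1 ∈ (0,m]`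
(innocent accusation sum) and every Gaussian `V` with mean `μ ≥ (1-2τ)m/π` and variance
`v2 ∈ (0, c0·m]` (coalition accusation sum) satisfy `P[W > Z] ≤ ε1` and
`P[V ≤ c0·Z] ≤ ε2`. -/
theorem gaussian_asymptotic_code_length
    (τ ε1 ε2 : ℝ) (hτ : τ ∈ Set.Ioo (0:ℝ) (1/2))
    (hε1 : ε1 ∈ Set.Ioo (0:ℝ) (1/2)) (hε2 : ε2 ∈ Set.Ioo (0:ℝ) (1/2))
    (hε1' : ε1 ≤ (1/2) * Erfc (1/2)) :
    ∃ c0star : ℕ, ∀ c0 : ℕ, c0star ≤ c0 →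
      ∀ m : ℝ,
        m = (⌈(2 * π ^ 2 / (1 - 2*τ) ^ 2) * (c0 : ℝ) ^ 2 *
              Real.log (1 / (ε1 * Real.sqrt (2*π)))⌉ : ℝ) →
      ∃ Z : ℝ,
        ∀ (Ω : Type) [MeasurableSpace Ω] (P : Measure Ω), IsProbabilityMeasure P →
        ∀ (W V : Ω → ℝ) (v1 v2 : NNReal) (μ : ℝ),
          0 < v1 → (v1 : ℝ) ≤ m → 0 < v2 → (v2 : ℝ) ≤ (c0 : ℝ) * m →
          (1 - 2*τ) * m / π ≤ μ →
          Measure.map W P = gaussianReal 0 v1 →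
          Measure.map V P = gaussianReal μ v2 →
          P {ω | Z < W ω} ≤ ENNReal.ofReal ε1
          ∧ P {ω | V ω ≤ (c0 : ℝ) * Z} ≤ ENNReal.ofReal ε2 := by
  have hL := one_half_lt_log_of_le_half_Erfc_half hε1.1 hε1'
  set K := √(2 * log (1 / (ε1 * √(2 * π))))
  have hK : 1 < K := (lt_sqrt zero_le_one).2 (by linarith)
  obtain ⟨x1, ⟨hx1, hx1K⟩, hx1ε⟩ := exists_mem_Ioo_gaussianTailBound_lt (by linarith)
    ((gaussianTailBound_sqrt_two_mul_log hε1.1 (by linarith)).trans_lt (div_lt_self hε1.1 hK))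
  refine ⟨⌈(ε2⁻¹ / (K - x1)) ^ 2⌉₊, fun c0 hc0 m hm ↦ ⟨x1 * √m, ?_⟩⟩
  intro Ω _ P _ W V v1 v2 μ hv1 hv1m hv2 hv2m hμ hW hV
  have hx2 : ε2⁻¹ ≤ √c0 * (K - x1) := le_sqrt_mul_of_div_sq_le (sub_pos.2 hx1K)
    ((Nat.le_ceil _).trans (by exact_mod_cast hc0))
  have hmean : c0 * K * √m ≤ μ := (mul_sqrt_two_mul_mul_sqrt_le (by linarith [hτ.2]) pi_pos
    c0.cast_nonneg (by linarith) (hm ▸ Int.le_ceil _)).trans hμ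
  have hgap : c0 * (x1 * √m) ≤ μ - ε2⁻¹ * √(c0 * m) := by
    have : ε2⁻¹ * √(c0 * m) ≤ c0 * (K - x1) * √m :=
      calc ε2⁻¹ * √(c0 * m) ≤ √c0 * (K - x1) * (√c0 * √m) := by
            rw [sqrt_mul c0.cast_nonneg]; gcongr
        _ = √c0 * √c0 * (K - x1) * √m := by ring
        _ = c0 * (K - x1) * √m := by rw [mul_self_sqrt c0.cast_nonneg]
    linarith
  exact ⟨(measure_lt_le_gaussianTailBound hW hv1.ne' hx1 hv1m (by simp)).trans
      (ENNReal.ofReal_le_ofReal hx1ε.le),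
    (measure_le_le_gaussianTailBound hV hv2.ne' (inv_pos.2 hε2.1) hv2m hgap).trans
      (ENNReal.ofReal_le_ofReal ((gaussianTailBound_le_inv (inv_pos.2 hε2.1)).trans_eq
        (inv_inv ε2)))⟩

end
end
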